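/- arXiv:1406.5875 — 2 statements merged into one kernel-verified Lean document; each statement's English description precedes it below -/
import Mathlib

section
/- Let n ∈ ℕ and let He_n denote the probabilists' Hermite polynomial of degree n (Mathlib's Polynomial.hermite n). Define u : ℝ → ℝ by u(x) = exp(−x²/2) · He_n(√2 · x). Then u is twice differentiable and for every x ∈ ℝ: −(1/2) u''(x) + (x²/2) u(x) = (n + 1/2) u(x). -/
/-!
Write `u x = exp (-x²/2) g x` with `g x = Heₙ(√2 x)`. Conjugating by the Gaussian turns
`d/dx` into `d/dx - x`, so `u'' = exp (-x²/2) (g'' - 2x g' + (x² - 1) g)`. Rescaling the Hermite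
equation `Heₙ'' = y Heₙ' - n Heₙ` by `y = √2 x` gives `g'' = 2x g' - 2n g`, hence
`u'' = (x² - 1 - 2n) u`, which is the eigenvalue equation.
-/

open Real

namespace Polynomial

lemma derivative_hermite_succ (n : ℕ) :
    derivative (hermite (n + 1)) = (n + 1 : ℕ) • hermite n := by
  induction n with
  | zero => simp [hermite_zero]
  | succ n ih =>
    rw [hermite_succ (n + 1), derivative_sub, derivative_mul, derivative_X, one_mul, ih,
      derivative_smul, mul_smul_comm, add_sub_assoc, ← smul_sub, ← hermite_succ n]
    simp only [succ_nsmul, nsmul_eq_mul]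
    ring

lemma derivative_derivative_hermite (n : ℕ) :
    derivative (derivative (hermite n)) = X * derivative (hermite n) - n • hermite n := by
  cases n with
  | zero => simp [hermite_zero]
  | succ n =>
    rw [derivative_hermite_succ, derivative_smul, hermite_succ, mul_smul_comm, smul_sub]
    abel

lemma hasDerivAt_aeval_const_mul {R : Type*} [CommSemiring R] [Algebra R ℝ] (q : R[X])
    (c x : ℝ) :
    HasDerivAt (fun x => aeval (c * x) q) (c * aeval (c * x) (derivative q)) x := by
  simpa [Function.comp_def, mul_comm] using
    (q.hasDerivAt_aeval (c * x)).comp x ((hasDerivAt_id x).const_mul c)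

lemma hasDerivAt_sqrt_two_mul_aeval_derivative_hermite (n : ℕ) (x : ℝ) :
    HasDerivAt (fun x => √2 * aeval (√2 * x) (derivative (hermite n)))
      (2 * x * (√2 * aeval (√2 * x) (derivative (hermite n)))
        - 2 * n * aeval (√2 * x) (hermite n)) x := by
  refine ((hasDerivAt_aeval_const_mul _ √2 x).const_mul √2).congr_deriv ?_
  have hsq : √2 * √2 = 2 := mul_self_sqrt zero_le_two
  rw [derivative_derivative_hermite]
  simp only [map_sub, map_mul, map_natCast, aeval_X, nsmul_eq_mul]
  linear_combination (x * (√2 * aeval (√2 * x) (derivative (hermite n)))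
    - n * aeval (√2 * x) (hermite n)) * hsq

end Polynomial

lemma hasDerivAt_exp_neg_sq_div_two_mul {g : ℝ → ℝ} {g' x : ℝ} (hg : HasDerivAt g g' x) :
    HasDerivAt (fun x => exp (-x ^ 2 / 2) * g x) (exp (-x ^ 2 / 2) * (g' - x * g x)) x := by
  have hexp : HasDerivAt (fun x => exp (-x ^ 2 / 2)) (exp (-x ^ 2 / 2) * -x) x :=
    (((hasDerivAt_pow 2 x).neg.div_const 2).congr_deriv (by ring)).exp
  exact (hexp.mul hg).congr_deriv (by ring)

lemma hasDerivAt_deriv_exp_neg_sq_div_two_mul {g g' : ℝ → ℝ} (c : ℝ)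
    (hg : ∀ x, HasDerivAt g (g' x) x)
    (hg' : ∀ x, HasDerivAt g' (2 * x * g' x - 2 * c * g x) x) (x : ℝ) :
    HasDerivAt (deriv fun x => exp (-x ^ 2 / 2) * g x)
      ((x ^ 2 - 1 - 2 * c) * (exp (-x ^ 2 / 2) * g x)) x := by
  have hderiv : (deriv fun x => exp (-x ^ 2 / 2) * g x) =
      fun x => exp (-x ^ 2 / 2) * (g' x - x * g x) :=
    funext fun x => (hasDerivAt_exp_neg_sq_div_two_mul (hg x)).deriv
  rw [hderiv]
  exact (hasDerivAt_exp_neg_sq_div_two_mul ((hg' x).sub ((hasDerivAt_id x).mul (hg x)))).congr_deriv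
    (by simp only [Pi.sub_apply, Pi.mul_apply, id]; ring)

/-- The Hermite function `exp(−x²/2) Hₙ(x) = exp(−x²/2) Heₙ(√2 x)` (up to the
constant `2^{n/2}`) is an eigenfunction of the harmonic oscillator Hamiltonian
`−(1/2) d²/dx² + x²/2` with eigenvalue `n + 1/2`. -/
theorem hermite_function_eigenfunction
    (n : ℕ) (u : ℝ → ℝ)
    (hu : ∀ x : ℝ,
      u x = Real.exp (-x ^ 2 / 2) * Polynomial.aeval (Real.sqrt 2 * x) (Polynomial.hermite n)) :
    (Differentiable ℝ u ∧ Differentiable ℝ (deriv u)) ∧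
      ∀ x : ℝ,
        -(1 / 2) * deriv (deriv u) x + x ^ 2 / 2 * u x = ((n : ℝ) + 1 / 2) * u x := by
  obtain rfl : u = fun x => exp (-x ^ 2 / 2) * Polynomial.aeval (√2 * x) (Polynomial.hermite n) :=
    funext hu
  have hg := Polynomial.hasDerivAt_aeval_const_mul (Polynomial.hermite n) √2
  have hu'' := hasDerivAt_deriv_exp_neg_sq_div_two_mul n hg
    (Polynomial.hasDerivAt_sqrt_two_mul_aeval_derivative_hermite n)
  refine ⟨⟨fun x => (hasDerivAt_exp_neg_sq_div_two_mul (hg x)).differentiableAt,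
    fun x => (hu'' x).differentiableAt⟩, fun x => ?_⟩
  rw [(hu'' x).deriv]
  ring
end

section
/- Let α > 0, D > 0 and μ > 0 be real numbers, set ω₀ = α √(2D/μ) and ρ = 2D/ω₀. Define ψ₀ : ℝ → ℝ by ψ₀(x) = exp(−(ρ − 1/2) α x) · exp(−ρ e^{−α x}). Then ψ₀ is twice differentiable and for every x ∈ ℝ: −(1/(2μ)) ψ₀''(x) + D (1 − e^{−α x})² ψ₀(x) = (ω₀/2 − ω₀²/(16 D)) ψ₀(x). -/
/-!
`ψ₀ = exp ∘ g` with `g x = -(ρ - 1/2) α x - ρ e^{-αx}`, so that `ψ₀'' = (g'' + g'²) ψ₀`.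
With `κ = α²/(2μ)` and `e = e^{-αx}` one finds `-(g'' + g'²)/(2μ) = -κ (ρ²(1 - e)² - ρ + 1/4)`,
so the potential `κρ²(1 - e)²` cancels exactly and leaves the constant `κ(ρ - 1/4)`.
The definitions of `ω₀` and `ρ` say precisely that `κρ² = D`, and then `κ(ρ - 1/4) = ω₀/2 - ω₀²/(16D)`.
-/

open Real

lemma hasDerivAt_deriv_exp_comp {g g' g'' : ℝ → ℝ} (hg : ∀ x, HasDerivAt g (g' x) x)
    (hg' : ∀ x, HasDerivAt g' (g'' x) x) (x : ℝ) :
    HasDerivAt (deriv fun y => exp (g y)) ((g'' x + g' x ^ 2) * exp (g x)) x := by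
  have hderiv : deriv (fun y => exp (g y)) = fun y => g' y * exp (g y) :=
    funext fun y => (hg y).exp.deriv.trans (mul_comm _ _)
  rw [hderiv]
  exact ((hg' x).mul (hg x).exp).congr_deriv (by ring)

noncomputable def morseExponent (α ρ x : ℝ) : ℝ := -(ρ - 1 / 2) * α * x - ρ * exp (-α * x)

section MorseExponent

variable (α ρ : ℝ)

lemma hasDerivAt_exp_neg_mul (x : ℝ) :
    HasDerivAt (fun y => exp (-α * y)) (-α * exp (-α * x)) x := by
  simpa [mul_comm] using ((hasDerivAt_id x).const_mul (-α)).exp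

lemma hasDerivAt_morseExponent (x : ℝ) :
    HasDerivAt (morseExponent α ρ) (α * (ρ * exp (-α * x) - (ρ - 1 / 2))) x :=
  (((hasDerivAt_id' x).const_mul (-(ρ - 1 / 2) * α)).sub
    ((hasDerivAt_exp_neg_mul α x).const_mul ρ)).congr_deriv (by ring)

lemma hasDerivAt_deriv_morseExponent (x : ℝ) :
    HasDerivAt (fun y => α * (ρ * exp (-α * y) - (ρ - 1 / 2))) (-ρ * α ^ 2 * exp (-α * x)) x :=
  ((((hasDerivAt_exp_neg_mul α x).const_mul ρ).sub_const (ρ - 1 / 2)).const_mul α).congr_deriv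
    (by ring)

lemma hasDerivAt_deriv_exp_morseExponent (x : ℝ) :
    HasDerivAt (deriv fun y => exp (morseExponent α ρ y))
      ((-ρ * α ^ 2 * exp (-α * x) + (α * (ρ * exp (-α * x) - (ρ - 1 / 2))) ^ 2) *
        exp (morseExponent α ρ x)) x :=
  hasDerivAt_deriv_exp_comp (hasDerivAt_morseExponent α ρ)
    (hasDerivAt_deriv_morseExponent α ρ) x

lemma morse_eigen_equation (μ x : ℝ) :
    -(1 / (2 * μ)) * deriv (deriv fun y => exp (morseExponent α ρ y)) x
        + α ^ 2 / (2 * μ) * ρ ^ 2 * (1 - exp (-α * x)) ^ 2 * exp (morseExponent α ρ x) =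
      α ^ 2 / (2 * μ) * (ρ - 1 / 4) * exp (morseExponent α ρ x) := by
  rw [(hasDerivAt_deriv_exp_morseExponent α ρ x).deriv]
  ring

end MorseExponent

lemma morse_parameters {α D μ ω₀ ρ : ℝ} (hα : 0 < α) (hD : 0 < D) (hμ : 0 < μ)
    (hω₀ : ω₀ = α * √(2 * D / μ)) (hρ : ρ = 2 * D / ω₀) :
    α ^ 2 / (2 * μ) * ρ ^ 2 = D ∧
      α ^ 2 / (2 * μ) * (ρ - 1 / 4) = ω₀ / 2 - ω₀ ^ 2 / (16 * D) := by
  have hω₀_pos : 0 < ω₀ := hω₀ ▸ by positivity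
  have hκ : α ^ 2 / (2 * μ) = ω₀ ^ 2 / (4 * D) := by
    rw [hω₀, mul_pow, sq_sqrt (by positivity)]
    field_simp
    norm_num
  rw [hκ, hρ]
  constructor <;> field_simp <;> ring

/-- The unnormalized Morse ground state `ψ₀(x) = exp(−(ρ−1/2)αx) exp(−ρ e^{−αx})`,
with `ρ = 2D/ω₀`, `ω₀ = α√(2D/μ)`, is an eigenfunction of the Morse Hamiltonian
`−(1/(2μ)) d²/dx² + D(1 − e^{−αx})²` with eigenvalue `ω₀/2 − ω₀²/(16D)`. -/
theorem morse_ground_state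
    (α D μ : ℝ) (hα : 0 < α) (hD : 0 < D) (hμ : 0 < μ)
    (ω₀ ρ : ℝ) (hω₀ : ω₀ = α * Real.sqrt (2 * D / μ)) (hρ : ρ = 2 * D / ω₀)
    (ψ₀ : ℝ → ℝ)
    (hψ₀ : ∀ x : ℝ,
      ψ₀ x = Real.exp (-(ρ - 1 / 2) * α * x) * Real.exp (-ρ * Real.exp (-α * x))) :
    (Differentiable ℝ ψ₀ ∧ Differentiable ℝ (deriv ψ₀)) ∧
      ∀ x : ℝ,
        -(1 / (2 * μ)) * deriv (deriv ψ₀) x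
            + D * (1 - Real.exp (-α * x)) ^ 2 * ψ₀ x =
          (ω₀ / 2 - ω₀ ^ 2 / (16 * D)) * ψ₀ x := by
  have hψ : ψ₀ = fun x => exp (morseExponent α ρ x) := funext fun x => by
    rw [hψ₀, ← exp_add, morseExponent, sub_eq_add_neg (-(ρ - 1 / 2) * α * x), neg_mul ρ]
  obtain ⟨hdepth, heigen⟩ := morse_parameters hα hD hμ hω₀ hρ
  subst hψ
  refine ⟨⟨fun x => (hasDerivAt_morseExponent α ρ x).exp.differentiableAt,
    fun x => (hasDerivAt_deriv_exp_morseExponent α ρ x).differentiableAt⟩, fun x => ?_⟩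
  rw [← heigen, ← hdepth]
  exact morse_eigen_equation α ρ μ x
end
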